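/- arXiv:2604.08423 — 3 statements merged into one kernel-verified Lean document; each statement's English description precedes it below -/
import Mathlib

section
/- Let g1, g2 : ℝ^d → ℝ be differentiable functions whose gradients are L-Lipschitz on the closed ball B(θ0, r) centered at θ0 with radius r > 0, and suppose |g1(θ) - g2(θ)| ≤ ε for all θ in B(θ0, r). Then ‖∇g1(θ0) - ∇g2(θ0)‖ ≤ 2ε/r + L·r. -/
/-!
Along the segment from `θ₀` to `θ₀ + u`, the derivative of `g₁ - g₂` drifts from its value at
`θ₀` by at most `2L t‖u‖` at time `t`; integrating gives the second-order Taylor bound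
`|(g₁ - g₂)(θ₀ + u) - (g₁ - g₂)(θ₀) - ⟪∇g₁ θ₀ - ∇g₂ θ₀, u⟫| ≤ L‖u‖²`. Since `|g₁ - g₂| ≤ ε` on the
ball, the linear term is at most `2ε + L r²` for `‖u‖ ≤ r`, and dividing by `r`
bounds the norm of the gradient difference.
-/

open Metric Set InnerProductSpace

section Taylor

variable {E F : Type*} [NormedAddCommGroup E] [NormedSpace ℝ E]
  [NormedAddCommGroup F] [NormedSpace ℝ F]
  {f : E → F} {f' : E → E →L[ℝ] F} {x₀ : E} {r K : ℝ}

theorem norm_image_sub_sub_fderiv_le_of_norm_fderiv_sub_le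
    (hf : ∀ x ∈ closedBall x₀ r, HasFDerivAt f (f' x) x)
    (hlip : ∀ x ∈ closedBall x₀ r, ‖f' x - f' x₀‖ ≤ K * ‖x - x₀‖)
    {h : E} (hh : ‖h‖ ≤ r) :
    ‖f (x₀ + h) - f x₀ - f' x₀ h‖ ≤ K / 2 * ‖h‖ ^ 2 := by
  have hmem : ∀ t ∈ Icc (0 : ℝ) 1, x₀ + t • h ∈ closedBall x₀ r := fun t ht => by
    rw [mem_closedBall, dist_eq_norm, add_sub_cancel_left, norm_smul, Real.norm_of_nonneg ht.1]
    nlinarith [norm_nonneg h, ht.2]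
  have hderiv : ∀ t ∈ Icc (0 : ℝ) 1, HasDerivAt (fun s : ℝ => f (x₀ + s • h) - f x₀ - s • f' x₀ h)
      (f' (x₀ + t • h) h - f' x₀ h) t := fun t ht => by
    have hpath : HasDerivAt (fun s : ℝ => x₀ + s • h) h t := by
      simpa using ((hasDerivAt_id t).smul_const h).const_add x₀
    exact ((((hf _ (hmem t ht)).comp_hasDerivAt t hpath).sub_const (f x₀)).sub
      ((hasDerivAt_id t).smul_const (f' x₀ h))).congr_deriv (by rw [one_smul])
  have hbound : ∀ t ∈ Ico (0 : ℝ) 1, ‖f' (x₀ + t • h) h - f' x₀ h‖ ≤ K * ‖h‖ ^ 2 * t :=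
    fun t ht => calc
      ‖f' (x₀ + t • h) h - f' x₀ h‖ ≤ ‖f' (x₀ + t • h) - f' x₀‖ * ‖h‖ := by
        exact (f' (x₀ + t • h) - f' x₀).le_opNorm h
      _ ≤ K * ‖t • h‖ * ‖h‖ := by
        gcongr
        simpa using hlip _ (hmem t (Ico_subset_Icc_self ht))
      _ = K * ‖h‖ ^ 2 * t := by rw [norm_smul, Real.norm_of_nonneg ht.1]; ring
  have hB : ∀ t : ℝ, HasDerivAt (fun s : ℝ => K / 2 * ‖h‖ ^ 2 * s ^ 2) (K * ‖h‖ ^ 2 * t) t :=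
    fun t => ((hasDerivAt_pow 2 t).const_mul (K / 2 * ‖h‖ ^ 2)).congr_deriv (by norm_num; ring)
  have := image_norm_le_of_norm_deriv_right_le_deriv_boundary
    (fun t ht => (hderiv t ht).continuousAt.continuousWithinAt)
    (fun t ht => (hderiv t (Ico_subset_Icc_self ht)).hasDerivWithinAt) (by simp) hB hbound
    (right_mem_Icc.2 zero_le_one)
  simpa using this

end Taylor

theorem norm_fderiv_le_of_abs_le_on_closedBall {E : Type*} [NormedAddCommGroup E]
    [NormedSpace ℝ E] {f : E → ℝ} {f' : E → E →L[ℝ] ℝ} {x₀ : E} {r K ε : ℝ}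
    (hr : 0 < r) (hK : 0 ≤ K)
    (hf : ∀ x ∈ closedBall x₀ r, HasFDerivAt f (f' x) x)
    (hlip : ∀ x ∈ closedBall x₀ r, ‖f' x - f' x₀‖ ≤ K * ‖x - x₀‖)
    (hclose : ∀ x ∈ closedBall x₀ r, |f x| ≤ ε) :
    ‖f' x₀‖ ≤ 2 * ε / r + K * r / 2 := by
  have hcenter := hclose x₀ (mem_closedBall_self hr.le)
  have hball : ∀ h ∈ closedBall (0 : E) r, ‖f' x₀ h‖ ≤ 2 * ε + K / 2 * r ^ 2 := fun h hh => by
    rw [mem_closedBall_zero_iff] at hh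
    have htaylor := norm_image_sub_sub_fderiv_le_of_norm_fderiv_sub_le hf hlip hh
    have hedge := hclose (x₀ + h) (by simpa [mem_closedBall, dist_eq_norm] using hh)
    have hsq : K / 2 * ‖h‖ ^ 2 ≤ K / 2 * r ^ 2 := by gcongr
    rw [Real.norm_eq_abs] at htaylor ⊢
    rw [abs_le] at htaylor hedge hcenter ⊢
    constructor <;> linarith
  calc ‖f' x₀‖ ≤ (2 * ε + K / 2 * r ^ 2) / r :=
        ContinuousLinearMap.opNorm_bound_of_ball_bound hr _ (f' x₀) hball
    _ = 2 * ε / r + K * r / 2 := by field_simp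

theorem norm_fderiv_sub_fderiv_eq_norm_gradient_sub {F : Type*} [NormedAddCommGroup F]
    [InnerProductSpace ℝ F] [CompleteSpace F] (f g : F → ℝ) (x y : F) :
    ‖fderiv ℝ f x - fderiv ℝ g y‖ = ‖gradient f x - gradient g y‖ := by
  rw [← toDual_gradient, ← toDual_gradient, ← map_sub, LinearIsometryEquiv.norm_map]

theorem gradient_close_of_close_on_ball_general
    {d : ℕ} (g₁ g₂ : EuclideanSpace ℝ (Fin d) → ℝ)
    (θ₀ : EuclideanSpace ℝ (Fin d)) (r ε L : ℝ)
    (hr : 0 < r) (hL : 0 ≤ L)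
    (hg₁ : Differentiable ℝ g₁) (hg₂ : Differentiable ℝ g₂)
    (hlip₁ : ∀ θ ∈ closedBall θ₀ r, ∀ θ' ∈ closedBall θ₀ r,
      ‖gradient g₁ θ - gradient g₁ θ'‖ ≤ L * ‖θ - θ'‖)
    (hlip₂ : ∀ θ ∈ closedBall θ₀ r, ∀ θ' ∈ closedBall θ₀ r,
      ‖gradient g₂ θ - gradient g₂ θ'‖ ≤ L * ‖θ - θ'‖)
    (hclose : ∀ θ ∈ closedBall θ₀ r, |g₁ θ - g₂ θ| ≤ ε) :
    ‖gradient g₁ θ₀ - gradient g₂ θ₀‖ ≤ 2 * ε / r + L * r := by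
  have hcenter : θ₀ ∈ closedBall θ₀ r := mem_closedBall_self hr.le
  have hdiff_lip : ∀ θ ∈ closedBall θ₀ r, ‖(fderiv ℝ g₁ θ - fderiv ℝ g₂ θ) -
      (fderiv ℝ g₁ θ₀ - fderiv ℝ g₂ θ₀)‖ ≤ 2 * L * ‖θ - θ₀‖ := fun θ hθ => calc
    _ ≤ ‖fderiv ℝ g₁ θ - fderiv ℝ g₁ θ₀‖ + ‖fderiv ℝ g₂ θ - fderiv ℝ g₂ θ₀‖ := by
      rw [sub_sub_sub_comm]; exact norm_sub_le _ _
    _ ≤ L * ‖θ - θ₀‖ + L * ‖θ - θ₀‖ := by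
      simp only [norm_fderiv_sub_fderiv_eq_norm_gradient_sub]
      gcongr
      exacts [hlip₁ θ hθ θ₀ hcenter, hlip₂ θ hθ θ₀ hcenter]
    _ = 2 * L * ‖θ - θ₀‖ := by ring
  have := norm_fderiv_le_of_abs_le_on_closedBall hr (by positivity)
    (fun θ _ => (hg₁ θ).hasFDerivAt.sub (hg₂ θ).hasFDerivAt) hdiff_lip hclose
  rw [norm_fderiv_sub_fderiv_eq_norm_gradient_sub] at this
  linarith

/-- Lemma 4: if two functions with `L`-Lipschitz gradients on the closed ball
`B(θ₀, r)` differ by at most `ε` on that ball, then their gradients at the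
center differ by at most `2ε/r + L·r`. -/
theorem gradient_close_of_close_on_ball
    {d : ℕ} (g₁ g₂ : EuclideanSpace ℝ (Fin d) → ℝ)
    (θ₀ : EuclideanSpace ℝ (Fin d)) (r ε L : ℝ)
    (hr : 0 < r) (hε : 0 ≤ ε) (hL : 0 ≤ L)
    (hg₁ : Differentiable ℝ g₁) (hg₂ : Differentiable ℝ g₂)
    (hlip₁ : ∀ θ ∈ closedBall θ₀ r, ∀ θ' ∈ closedBall θ₀ r,
      ‖gradient g₁ θ - gradient g₁ θ'‖ ≤ L * ‖θ - θ'‖)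
    (hlip₂ : ∀ θ ∈ closedBall θ₀ r, ∀ θ' ∈ closedBall θ₀ r,
      ‖gradient g₂ θ - gradient g₂ θ'‖ ≤ L * ‖θ - θ'‖)
    (hclose : ∀ θ ∈ closedBall θ₀ r, |g₁ θ - g₂ θ| ≤ ε) :
    ‖gradient g₁ θ₀ - gradient g₂ θ₀‖ ≤ 2 * ε / r + L * r :=
  gradient_close_of_close_on_ball_general g₁ g₂ θ₀ r ε L hr hL hg₁ hg₂ hlip₁ hlip₂ hclose
end

section
/- Let f : ℝ → ℝ be twice differentiable with |f''(t)| ≤ 2L for all t ∈ [0, r], and |f(t)| ≤ ε for all t ∈ [0, r], where r > 0. Then |f'(0)| ≤ 2ε/r + L·r. -/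
open Set

theorem exists_eq_add_mul_deriv_add_deriv_deriv_mul_sq {f : ℝ → ℝ} {a b : ℝ} (hab : a ≠ b)
    (hf : Differentiable ℝ f) (hf' : Differentiable ℝ (deriv f)) :
    ∃ ν ∈ uIoo a b, f b = f a + (b - a) * deriv f a + deriv (deriv f) ν * (b - a) ^ 2 / 2 := by
  -- `f''` need not be continuous, so we use the `iteratedDerivWithin` form of Lagrange's theorem
  -- and identify those derivatives with the global ones on the interval.
  have hu : UniqueDiffOn ℝ (uIcc a b) := uniqueDiffOn_uIcc hab
  have hderiv : EqOn (iteratedDerivWithin 1 f (uIcc a b)) (deriv f) (uIcc a b) := fun x hx => by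
    rw [iteratedDerivWithin_one]
    exact (hf x).derivWithin (hu x hx)
  have hderiv2 : EqOn (iteratedDerivWithin 2 f (uIcc a b)) (deriv (deriv f)) (uIcc a b) :=
    fun x hx => by
      rw [iteratedDerivWithin_succ, derivWithin_congr hderiv (hderiv hx)]
      exact (hf' x).derivWithin (hu x hx)
  obtain ⟨ν, hν, h⟩ := taylor_mean_remainder_lagrange (n := 1) hab
    (contDiff_one_iff_deriv.mpr ⟨hf, hf'.continuous⟩).contDiffOn
    (hf'.differentiableOn.congr fun x hx => hderiv (uIoo_subset_uIcc_self hx))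
  refine ⟨ν, hν, ?_⟩
  rw [taylor_within_apply, hderiv2 (uIoo_subset_uIcc_self hν)] at h
  simp only [Nat.reduceAdd, smul_eq_mul, Finset.sum_range_succ, Finset.range_one,
    Finset.sum_singleton, Nat.factorial_zero, Nat.cast_one, inv_one, pow_zero, mul_one,
    iteratedDerivWithin_zero, one_mul, Nat.factorial_one, pow_one, hderiv left_mem_uIcc,
    Nat.factorial_two, Nat.cast_ofNat] at h
  linarith

theorem abs_mul_deriv_le_of_abs_deriv_deriv_le {f : ℝ → ℝ} {a b M : ℝ} (hab : a < b)
    (hf : Differentiable ℝ f) (hf' : Differentiable ℝ (deriv f))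
    (hM : ∀ t ∈ Icc a b, |deriv (deriv f) t| ≤ M) :
    |(b - a) * deriv f a| ≤ |f a| + |f b| + M * (b - a) ^ 2 / 2 := by
  obtain ⟨ν, hν, h⟩ := exists_eq_add_mul_deriv_add_deriv_deriv_mul_sq hab.ne hf hf'
  rw [uIoo_of_le hab.le] at hν
  have hrem : |deriv (deriv f) ν * (b - a) ^ 2 / 2| ≤ M * (b - a) ^ 2 / 2 := by
    rw [abs_div, abs_mul, abs_of_nonneg (sq_nonneg (b - a)), abs_two]
    gcongr
    exact hM ν (Ioo_subset_Icc_self hν)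
  rw [show (b - a) * deriv f a = f b - f a - deriv (deriv f) ν * (b - a) ^ 2 / 2 by linarith]
  exact (abs_sub _ _).trans (by linarith [abs_sub (f b) (f a)])

theorem deriv_at_zero_bound_general (f : ℝ → ℝ) (r ε L : ℝ)
    (hr : 0 < r)
    (hf : Differentiable ℝ f) (hf' : Differentiable ℝ (deriv f))
    (hf'' : ∀ t ∈ Icc (0 : ℝ) r, |deriv (deriv f) t| ≤ 2 * L)
    (hfb : ∀ t ∈ Icc (0 : ℝ) r, |f t| ≤ ε) :
    |deriv f 0| ≤ 2 * ε / r + L * r := by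
  have hslice := abs_mul_deriv_le_of_abs_deriv_deriv_le hr hf hf' hf''
  have hf0 := hfb 0 (left_mem_Icc.mpr hr.le)
  have hfr := hfb r (right_mem_Icc.mpr hr.le)
  rw [sub_zero, abs_mul, abs_of_pos hr] at hslice
  rw [div_add' _ _ _ hr.ne', le_div_iff₀ hr]
  nlinarith

/-- One-dimensional slice bound: if `f` is twice differentiable with
`|f''| ≤ 2L` and `|f| ≤ ε` on `[0, r]`, then `|f'(0)| ≤ 2ε/r + L·r`. -/
theorem deriv_at_zero_bound (f : ℝ → ℝ) (r ε L : ℝ)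
    (hr : 0 < r) (hε : 0 ≤ ε) (hL : 0 ≤ L)
    (hf : Differentiable ℝ f) (hf' : Differentiable ℝ (deriv f))
    (hf'' : ∀ t ∈ Icc (0 : ℝ) r, |deriv (deriv f) t| ≤ 2 * L)
    (hfb : ∀ t ∈ Icc (0 : ℝ) r, |f t| ≤ ε) :
    |deriv f 0| ≤ 2 * ε / r + L * r :=
  deriv_at_zero_bound_general f r ε L hr hf hf' hf'' hfb
end

section
/- Let A and B be symmetric positive definite d×d real matrices whose smallest eigenvalues are each at least λ_min > 0. Then the Frobenius norm of the difference of their (positive definite) square roots satisfies ‖A^{1/2} - B^{1/2}‖_F ≤ (1/(2√λ_min)) ‖A - B‖_F. -/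
/-!
Write `S = A^{1/2}`, `T = B^{1/2}` and `E = S - T`, so that `A - B = S E + E T`. The spectral
bound on `A` gives `√λ_min ≤ S` in the Loewner order, and likewise for `T`; conjugating by `E`
and taking traces, `⟨E, S E + E T⟩_F = tr (Eᵀ S E) + tr (E T Eᵀ) ≥ 2 √λ_min ‖E‖_F²`.
Cauchy–Schwarz bounds the left-hand side by `‖E‖_F ‖A - B‖_F`.
-/

open Matrix

/-- Frobenius norm of a real matrix. -/
noncomputable def frobNorm {d : ℕ} (M : Matrix (Fin d) (Fin d) ℝ) : ℝ :=
  Real.sqrt (∑ i, ∑ j, (M i j) ^ 2)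

/-- The positive semidefinite square root of a positive semidefinite matrix
(the definition Mathlib had as `Matrix.PosSemidef.sqrt`, since removed). -/
noncomputable def Matrix.PosSemidef.sqrt {n 𝕜 : Type*} [Fintype n] [DecidableEq n] [RCLike 𝕜]
    [PartialOrder 𝕜]
    {A : Matrix n n 𝕜} (hA : A.PosSemidef) : Matrix n n 𝕜 :=
  hA.1.eigenvectorUnitary.1 * diagonal ((↑) ∘ (√·) ∘ hA.1.eigenvalues) *
  (star hA.1.eigenvectorUnitary : Matrix n n 𝕜)

open scoped MatrixOrder

lemma algebraMap_sqrt_le_cfc_sqrt {A : Type*} [TopologicalSpace A] [Ring A] [StarRing A]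
    [PartialOrder A] [StarOrderedRing A] [Algebra ℝ A]
    [ContinuousFunctionalCalculus ℝ A IsSelfAdjoint] [NonnegSpectrumClass ℝ A]
    {a : A} {r : ℝ} (ha : IsSelfAdjoint a) (h : algebraMap ℝ A r ≤ a) :
    algebraMap ℝ A √r ≤ cfc Real.sqrt a :=
  algebraMap_le_cfc _ _ _ fun _ hx ↦
    Real.sqrt_le_sqrt ((algebraMap_le_iff_le_spectrum ha).1 h _ hx)

namespace Matrix

variable {n : Type*} [Fintype n] [DecidableEq n]

lemma PosSemidef.sqrt_eq_cfc {A : Matrix n n ℝ} (hA : A.PosSemidef) :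
    hA.sqrt = cfc Real.sqrt A := by
  rw [hA.1.cfc_eq]
  rfl

lemma PosSemidef.sqrt_mul_self {A : Matrix n n ℝ} (hA : A.PosSemidef) :
    hA.sqrt * hA.sqrt = A := by
  rw [hA.sqrt_eq_cfc, ← cfc_mul ..]
  conv_rhs => rw [← cfc_id' ℝ A]
  exact cfc_congr fun x hx ↦ Real.mul_self_sqrt (spectrum_nonneg_of_nonneg hA.nonneg hx)

lemma algebraMap_le_of_forall_le_dotProduct_mulVec {A : Matrix n n ℝ} (hA : A.IsHermitian)
    {c : ℝ} (h : ∀ x, c * (x ⬝ᵥ x) ≤ x ⬝ᵥ A *ᵥ x) : algebraMap ℝ _ c ≤ A := by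
  refine PosSemidef.of_dotProduct_mulVec_nonneg (hA.sub (isHermitian_diagonal _)) fun x ↦ ?_
  rw [star_trivial, sub_mulVec, dotProduct_sub, Algebra.algebraMap_eq_smul_one, smul_mulVec,
    one_mulVec, dotProduct_smul, smul_eq_mul, sub_nonneg]
  exact h x

lemma PosSemidef.algebraMap_sqrt_le_sqrt {A : Matrix n n ℝ} (hA : A.PosSemidef) {c : ℝ}
    (h : ∀ x, c * (x ⬝ᵥ x) ≤ x ⬝ᵥ A *ᵥ x) : algebraMap ℝ _ √c ≤ hA.sqrt :=
  hA.sqrt_eq_cfc ▸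
    algebraMap_sqrt_le_cfc_sqrt hA.1 (algebraMap_le_of_forall_le_dotProduct_mulVec hA.1 h)

lemma mul_trace_transpose_mul_le {S : Matrix n n ℝ} {c : ℝ} (hS : algebraMap ℝ _ c ≤ S)
    {m : Type*} [Fintype m] (X : Matrix n m ℝ) :
    c * trace (Xᵀ * X) ≤ trace (Xᵀ * S * X) := by
  have := ((le_iff.mp hS).conjTranspose_mul_mul_same X).trace_nonneg
  rwa [conjTranspose_eq_transpose_of_trivial, Matrix.mul_sub, Matrix.sub_mul, trace_sub,
    Algebra.algebraMap_eq_smul_one, Matrix.mul_smul, Matrix.mul_one, Matrix.smul_mul, trace_smul,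
    sub_nonneg] at this

lemma add_mul_trace_transpose_mul_le {S T : Matrix n n ℝ} {a b : ℝ}
    (hS : algebraMap ℝ _ a ≤ S) (hT : algebraMap ℝ _ b ≤ T) (X : Matrix n n ℝ) :
    (a + b) * trace (Xᵀ * X) ≤ trace (Xᵀ * (S * X + X * T)) := by
  have hT' := mul_trace_transpose_mul_le hT Xᵀ
  rw [transpose_transpose, trace_mul_comm, trace_mul_cycle] at hT'
  rw [Matrix.mul_add, trace_add, add_mul, ← Matrix.mul_assoc, ← Matrix.mul_assoc]
  exact add_le_add (mul_trace_transpose_mul_le hS X) hT'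

end Matrix

section FrobeniusNorm

variable {d : ℕ}

lemma frobNorm_nonneg (M : Matrix (Fin d) (Fin d) ℝ) : 0 ≤ frobNorm M :=
  Real.sqrt_nonneg _

lemma frobNorm_sq (M : Matrix (Fin d) (Fin d) ℝ) : frobNorm M ^ 2 = trace (Mᵀ * M) := by
  rw [frobNorm, Real.sq_sqrt (by positivity), Finset.sum_comm]
  simp only [trace, diag, mul_apply, transpose_apply, sq]

lemma trace_transpose_mul_le_frobNorm_mul (X Y : Matrix (Fin d) (Fin d) ℝ) :
    trace (Xᵀ * Y) ≤ frobNorm X * frobNorm Y := by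
  have cauchySchwarz := Real.sum_mul_le_sqrt_mul_sqrt Finset.univ
    (fun p : Fin d × Fin d ↦ X p.1 p.2) (fun p ↦ Y p.1 p.2)
  simp only [Fintype.sum_prod_type] at cauchySchwarz
  simp only [frobNorm, trace, diag, mul_apply, transpose_apply]
  rwa [Finset.sum_comm]

end FrobeniusNorm

/-- Lipschitz property of the matrix square root: for symmetric positive
definite `A, B` with eigenvalues at least `λmin > 0`,
`‖A^{1/2} - B^{1/2}‖_F ≤ ‖A - B‖_F / (2√λmin)`. -/
theorem sqrt_lipschitz_of_eigenvalue_lower_bound {d : ℕ}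
    (A B : Matrix (Fin d) (Fin d) ℝ) (lammin : ℝ) (hlam : 0 < lammin)
    (hA : A.PosDef) (hB : B.PosDef)
    (hAlam : ∀ x : Fin d → ℝ, lammin * (x ⬝ᵥ x) ≤ x ⬝ᵥ A.mulVec x)
    (hBlam : ∀ x : Fin d → ℝ, lammin * (x ⬝ᵥ x) ≤ x ⬝ᵥ B.mulVec x) :
    frobNorm (hA.posSemidef.sqrt - hB.posSemidef.sqrt)
      ≤ (1 / (2 * Real.sqrt lammin)) * frobNorm (A - B) := by
  have hS := hA.posSemidef.algebraMap_sqrt_le_sqrt hAlam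
  have hT := hB.posSemidef.algebraMap_sqrt_le_sqrt hBlam
  set S := hA.posSemidef.sqrt
  set T := hB.posSemidef.sqrt
  have hAB : A - B = S * (S - T) + (S - T) * T := by
    conv_lhs => rw [← hA.posSemidef.sqrt_mul_self, ← hB.posSemidef.sqrt_mul_self]
    noncomm_ring
  have key : 2 * √lammin * frobNorm (S - T) ^ 2 ≤ frobNorm (S - T) * frobNorm (A - B) := calc
    _ = (√lammin + √lammin) * trace ((S - T)ᵀ * (S - T)) := by rw [frobNorm_sq]; ring
    _ ≤ trace ((S - T)ᵀ * (S * (S - T) + (S - T) * T)) := add_mul_trace_transpose_mul_le hS hT _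
    _ = trace ((S - T)ᵀ * (A - B)) := by rw [hAB]
    _ ≤ _ := trace_transpose_mul_le_frobNorm_mul _ _
  rw [one_div, inv_mul_eq_div, le_div_iff₀ (by positivity)]
  obtain hE | hE := (frobNorm_nonneg (S - T)).eq_or_lt
  · rw [← hE, zero_mul]
    exact frobNorm_nonneg _
  · nlinarith
end
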